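/- arXiv:0804.1396 — 2 statements merged into one kernel-verified Lean document; each statement's English description precedes it below -/
import Mathlib

section
/- Let n ≥ 3, let X be a type, let R be a set of elements of the free group F_X on X, and let T be a finite group with a surjective homomorphism π : F_X → T whose kernel is the normal closure of R (so T has presentation ⟨X | R⟩). Let α : T → Equiv.Perm (Fin n) be a homomorphism (an action of T on n points, not necessarily faithful) that is 2-homogeneous: for any two 2-element subsets P and Q of Fin n there exists t ∈ T such that the image of P under α(t) equals Q. Let X₁ be a set of elements of F_X whose images under π generate the stabilizer {t ∈ T : α(t)(0) = 0} of the point 0, and let w ∈ F_X be such that the permutation α(π(w)) moves the point 0 and is an even permutation. Let J be the group presented on the generator type X ⊕ Unit (write z for the extra generator and regard each word v ∈ F_X as a word in the larger free group via the inclusion induced by the left injection) with relators: all elements of R, together with z³, (z · z^w)², and, for each u ∈ X₁, the relator z^u · z^{-ε(u)}, where ε(u) = +1 if the permutation α(π(u)) is even and ε(u) = -1 if it is odd (so the relation says z^u = z when α(π(u)) is even and z^u = z⁻¹ otherwise). Then J is isomorphic to the direct product A_{n+2} × T. -/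
open Equiv

/-- The inclusion of `FreeGroup X` into `FreeGroup (X ⊕ Unit)` induced by `Sum.inl`. -/
def inclFree (X : Type*) : FreeGroup X →* FreeGroup (X ⊕ Unit) :=
  FreeGroup.map Sum.inl

/-- The extra generator `z` of `FreeGroup (X ⊕ Unit)`. -/
def zGen (X : Type*) : FreeGroup (X ⊕ Unit) :=
  FreeGroup.of (Sum.inr ())

/-- The relators of the presentation of Lemma `using Carmichael`: the relators `R` of `T`,
together with `z³`, `(z·z^w)²`, and `z^u = z^{sign u}` for each `u ∈ X₁`. -/
def carmichaelRels {X : Type*} (n : ℕ) (R : Set (FreeGroup X)) (X₁ : Set (FreeGroup X))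
    (w : FreeGroup X) {T : Type*} [Group T] (π : FreeGroup X →* T)
    (α : T →* Equiv.Perm (Fin n)) : Set (FreeGroup (X ⊕ Unit)) :=
  (inclFree X '' R) ∪
    {zGen X ^ 3, (zGen X * ((inclFree X w)⁻¹ * zGen X * inclFree X w)) ^ 2} ∪
    (⋃ u ∈ X₁, {((inclFree X u)⁻¹ * zGen X * inclFree X u) *
      (zGen X ^ (if Equiv.Perm.sign (α (π u)) = 1 then (1 : ℤ) else -1))⁻¹})

/-!
The group `J` maps onto `A_{n+2} × T`: a word `v` in the generators of `T` goes to
`(α̂ (π v), π v)`, where `α̂ t` extends `α t` to `n + 2` points by swapping the two new points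
exactly when `α t` is odd, and `z` goes to `(ζ, 1)` with `ζ` the 3-cycle `(0, n, n+1)`. The
relators hold there, and the conjugates of `ζ` under `α̂ T` are the 3-cycles `(i, n, n+1)`, which
generate `A_{n+2}`.

Conversely, in `J` the conjugate `z^t` raised to the sign of `t` depends only on the point
`α(t)⁻¹ 0` (this is what the relators `z^u = z^{±1}` for the stabiliser say), giving `n` elements
`y_i` with `y_i³ = 1`; by 2-homogeneity the single relator `(z z^w)² = 1` spreads to
`(y_i y_j)² = 1` for all `i ≠ j`. By Carmichael's coset enumeration such elements generate a group
`K` of order at most `(n+2)!/2`. As `K` is normalised by `T`, `J = T K`, so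
`|J| ≤ |T| (n+2)!/2 = |A_{n+2} × T|` and the surjection is an isomorphism.
-/

section GroupRelations

variable {G : Type*} [Group G]

theorem inv_eq_mul_self_of_pow_three {x : G} (hx : x ^ 3 = 1) : x⁻¹ = x * x :=
  (eq_inv_of_mul_eq_one_left (by rw [← hx, pow_three, mul_assoc])).symm

theorem mul_mul_eq_inv_of_mul_sq_eq_one {x y : G} (h : (x * y) ^ 2 = 1) : x * y * x = y⁻¹ :=
  mul_eq_one_iff_eq_inv.1 (by rw [← h, pow_two, mul_assoc])

theorem mul_sq_eq_one_comm {x y : G} : (x * y) ^ 2 = 1 ↔ (y * x) ^ 2 = 1 := by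
  have key (a b : G) (h : (a * b) ^ 2 = 1) : (b * a) ^ 2 = 1 :=
    calc (b * a) ^ 2 = b * (a * b * a) := by rw [pow_two]; group
      _ = 1 := by rw [mul_mul_eq_inv_of_mul_sq_eq_one h, mul_inv_cancel]
  exact ⟨key x y, key y x⟩

theorem inv_mul_mul_eq_mul_inv {a z : G} (hz : z ^ 3 = 1) (haz : (a * z) ^ 2 = 1) :
    z⁻¹ * a * z = z * a⁻¹ :=
  calc z⁻¹ * a * z = z * (z * a * z) := by rw [inv_eq_mul_self_of_pow_three hz]; group
    _ = z * a⁻¹ := by rw [mul_mul_eq_inv_of_mul_sq_eq_one (mul_sq_eq_one_comm.1 haz)]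

theorem zpow_units_zpow_units (x : G) (u : ℤˣ) : (x ^ (u : ℤ)) ^ (u : ℤ) = x := by
  rw [← zpow_mul, ← Units.val_mul, Int.units_mul_self, Units.val_one, zpow_one]

theorem inv_mul_zpow_mul (g x : G) (k : ℤ) : (g⁻¹ * x * g) ^ k = g⁻¹ * x ^ k * g := by
  simpa using conj_zpow (a := g⁻¹) (b := x) (i := k)

theorem mul_sq_eq_one_of_zpow_units {x y : G} {u : ℤˣ}
    (h : (x ^ (u : ℤ) * y ^ (u : ℤ)) ^ 2 = 1) : (x * y) ^ 2 = 1 := by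
  rcases Int.units_eq_one_or u with rfl | rfl
  · simpa using h
  · rw [Units.val_neg, Units.val_one, zpow_neg_one, zpow_neg_one, ← mul_inv_rev, inv_pow,
      inv_eq_one] at h
    exact mul_sq_eq_one_comm.1 h

theorem Subgroup.closure_range_restrict_eq_top {ι : Type*} (g : ι → G) :
    closure (Set.range fun i =>
      (⟨g i, subset_closure (Set.mem_range_self i)⟩ : closure (Set.range g))) = ⊤ := by
  rw [← closure_closure_coe_preimage]
  congr 1
  ext x
  exact ⟨by rintro ⟨i, rfl⟩; exact ⟨i, rfl⟩, by rintro ⟨i, hi⟩; exact ⟨i, Subtype.ext hi⟩⟩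

end GroupRelations

namespace Carmichael

variable {G : Type*} [Group G] {H : Subgroup G} {a b z : G}

theorem mk_mul_eq_mk_sq (hz : z ^ 3 = 1) (ha : a ∈ H) (haz : (a * z) ^ 2 = 1) :
    ((a * z : G) : G ⧸ H) = ((z ^ 2 : G) : G ⧸ H) := by
  have key : (a * z)⁻¹ * z ^ 2 = a :=
    calc (a * z)⁻¹ * z ^ 2 = (z⁻¹ * a * z)⁻¹ * z := by rw [pow_two]; group
      _ = a := by rw [inv_mul_mul_eq_mul_inv hz haz]; group
  exact QuotientGroup.eq.2 (by rw [key]; exact ha)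

theorem mk_mul_sq_eq_mk_inv_mul (hz : z ^ 3 = 1) (ha3 : a ^ 3 = 1) (ha : a ∈ H)
    (haz : (a * z) ^ 2 = 1) : ((a * z ^ 2 : G) : G ⧸ H) = ((a⁻¹ * z : G) : G ⧸ H) := by
  have key : (a * z ^ 2)⁻¹ * (a⁻¹ * z) = a⁻¹ :=
    calc (a * z ^ 2)⁻¹ * (a⁻¹ * z) = (z * z)⁻¹ * (a * a)⁻¹ * z := by rw [pow_two]; group
      _ = z * a * z := by
        rw [← inv_eq_mul_self_of_pow_three hz, ← inv_eq_mul_self_of_pow_three ha3, inv_inv,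
          inv_inv]
      _ = a⁻¹ := mul_mul_eq_inv_of_mul_sq_eq_one (mul_sq_eq_one_comm.1 haz)
  exact QuotientGroup.eq.2 (by rw [key]; exact H.inv_mem ha)

theorem mk_mul_inv_mul_eq_mk_inv_mul (hz : z ^ 3 = 1) (ha3 : a ^ 3 = 1) (ha : a ∈ H)
    (haz : (a * z) ^ 2 = 1) : ((z * (a⁻¹ * z) : G) : G ⧸ H) = ((a⁻¹ * z : G) : G ⧸ H) := by
  have key : (a⁻¹ * z)⁻¹ * (z * (a⁻¹ * z)) = a⁻¹ :=
    calc (a⁻¹ * z)⁻¹ * (z * (a⁻¹ * z)) = z⁻¹ * a * z * a⁻¹ * z := by group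
      _ = z * (a * a)⁻¹ * z := by rw [inv_mul_mul_eq_mul_inv hz haz]; group
      _ = z * a * z := by rw [← inv_eq_mul_self_of_pow_three ha3, inv_inv]
      _ = a⁻¹ := mul_mul_eq_inv_of_mul_sq_eq_one (mul_sq_eq_one_comm.1 haz)
  exact (QuotientGroup.eq.2 (by rw [key]; exact H.inv_mem ha)).symm

theorem mk_mul_inv_mul_eq_mk_inv_mul_of_mem (hz : z ^ 3 = 1) (ha3 : a ^ 3 = 1) (ha : a ∈ H)
    (hb : b ∈ H) (haz : (a * z) ^ 2 = 1) (hbz : (b * z) ^ 2 = 1) (hab : (a * b) ^ 2 = 1) :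
    ((b * (a⁻¹ * z) : G) : G ⧸ H) = ((a⁻¹ * z : G) : G ⧸ H) := by
  have key : (a⁻¹ * z)⁻¹ * (b * (a⁻¹ * z)) = b * a⁻¹ :=
    calc (a⁻¹ * z)⁻¹ * (b * (a⁻¹ * z)) = z⁻¹ * (a * b * a) * (a * a)⁻¹ * z := by group
      _ = (z⁻¹ * b * z)⁻¹ * (z⁻¹ * a * z) := by
        rw [mul_mul_eq_inv_of_mul_sq_eq_one hab, ← inv_eq_mul_self_of_pow_three ha3, inv_inv]; group
      _ = b * a⁻¹ := by rw [inv_mul_mul_eq_mul_inv hz hbz, inv_mul_mul_eq_mul_inv hz haz]; group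
  exact (QuotientGroup.eq.2 (by rw [key]; exact H.mul_mem hb (H.inv_mem ha))).symm

variable {m : ℕ}

def coset (H : Subgroup G) (a : Fin m → G) (z : G) : Fin 3 ⊕ Fin m → G ⧸ H :=
  Sum.elim (fun k => ((z ^ (k : ℕ) : G) : G ⧸ H)) (fun i => (((a i)⁻¹ * z : G) : G ⧸ H))

variable {a : Fin m → G}

@[simp]
theorem coset_inl (k : Fin 3) : coset H a z (.inl k) = ((z ^ (k : ℕ) : G) : G ⧸ H) := rfl

@[simp]
theorem coset_inr (i : Fin m) : coset H a z (.inr i) = (((a i)⁻¹ * z : G) : G ⧸ H) := rfl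

theorem smul_mem_range_coset (ha : ∀ i, a i ∈ H) (hz : z ^ 3 = 1) (ha3 : ∀ i, a i ^ 3 = 1)
    (haz : ∀ i, (a i * z) ^ 2 = 1) (haa : ∀ i j, i ≠ j → (a i * a j) ^ 2 = 1)
    ⦃g : G⦄ (hg : g ∈ insert z (Set.range a)) ⦃c : G ⧸ H⦄ (hc : c ∈ Set.range (coset H a z)) :
    g • c ∈ Set.range (coset H a z) := by
  obtain ⟨s, rfl⟩ := hc
  rcases hg with rfl | ⟨j, rfl⟩ <;> rcases s with k | i <;>
    simp only [coset_inl, coset_inr, MulAction.Quotient.smul_coe, smul_eq_mul]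
  · fin_cases k
    · exact ⟨.inl 1, by simp⟩
    · exact ⟨.inl 2, by simp [pow_two]⟩
    · exact ⟨.inl 0, by simp [← pow_succ', hz]⟩
  · exact ⟨.inr i, (mk_mul_inv_mul_eq_mk_inv_mul hz (ha3 i) (ha i) (haz i)).symm⟩
  · fin_cases k
    · exact ⟨.inl 0, QuotientGroup.eq.2 (by simpa using ha j)⟩
    · exact ⟨.inl 2, by simpa using (mk_mul_eq_mk_sq hz (ha j) (haz j)).symm⟩
    · exact ⟨.inr j, (mk_mul_sq_eq_mk_inv_mul hz (ha3 j) (ha j) (haz j)).symm⟩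
  · rcases eq_or_ne i j with rfl | hij
    · exact ⟨.inl 1, by simp⟩
    · exact ⟨.inr i, (mk_mul_inv_mul_eq_mk_inv_mul_of_mem hz (ha3 i) (ha i) (ha j) (haz i)
        (haz j) (haa i j hij)).symm⟩

theorem coset_surjective (hgen : Subgroup.closure (insert z (Set.range a)) = ⊤)
    (ha : ∀ i, a i ∈ H) (hz : z ^ 3 = 1) (ha3 : ∀ i, a i ^ 3 = 1)
    (haz : ∀ i, (a i * z) ^ 2 = 1) (haa : ∀ i j, i ≠ j → (a i * a j) ^ 2 = 1) :
    Function.Surjective (coset H a z) := by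
  have step := smul_mem_range_coset ha hz ha3 haz haa
  refine fun q => QuotientGroup.induction_on q fun x => ?_
  induction hgen ▸ Subgroup.mem_top x using Subgroup.closure_induction_left with
  | one => exact ⟨.inl 0, by simp⟩
  | mul_left g hg y _ ih => exact step hg ih
  | inv_mul_cancel g hg y _ ih =>
    have hg3 : g ^ 3 = 1 := by
      rcases hg with rfl | ⟨i, rfl⟩
      exacts [hz, ha3 i]
    have h := step hg (step hg ih)
    rwa [smul_smul, ← inv_eq_mul_self_of_pow_three hg3] at h

theorem finite_and_two_mul_card_le_of_closure_eq_top (g : Fin m → G)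
    (hgen : Subgroup.closure (Set.range g) = ⊤) (h3 : ∀ i, g i ^ 3 = 1)
    (h2 : ∀ i j, i ≠ j → (g i * g j) ^ 2 = 1) :
    Finite G ∧ 2 * Nat.card G ≤ (m + 2).factorial := by
  induction m generalizing G with
  | zero =>
    rw [Set.range_eq_empty, Subgroup.closure_empty] at hgen
    have : Subsingleton G := Subgroup.subsingleton_iff.1 (subsingleton_iff_bot_eq_top.1 hgen)
    exact ⟨inferInstance, by simp [Nat.factorial]⟩
  | succ m ih =>
    set H := Subgroup.closure (Set.range (Fin.tail g))
    obtain ⟨hHfin, hHcard⟩ := ih _ (Subgroup.closure_range_restrict_eq_top (Fin.tail g))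
      (fun i => Subtype.ext (by simpa [Fin.tail] using h3 i.succ))
      (fun i j hij =>
        Subtype.ext (by simpa [Fin.tail] using h2 _ _ ((Fin.succ_injective _).ne hij)))
    have hsurj := coset_surjective (H := H) (by rwa [← Fin.range_fin_succ])
      (fun i => Subgroup.subset_closure ⟨i, rfl⟩) (h3 0) (fun i => h3 i.succ)
      (fun i => h2 _ _ (Fin.succ_ne_zero i))
      (fun i j hij => h2 _ _ ((Fin.succ_injective _).ne hij))
    have : Finite (G ⧸ H) := Finite.of_surjective _ hsurj
    have hindex : Nat.card (G ⧸ H) ≤ m + 3 := by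
      simpa [Nat.card_sum, add_comm] using Nat.card_le_card_of_surjective _ hsurj
    refine ⟨Finite.of_equiv _ H.groupEquivQuotientProdSubgroup.symm, ?_⟩
    calc 2 * Nat.card G = Nat.card (G ⧸ H) * (2 * Nat.card H) := by
          rw [H.card_eq_card_quotient_mul_card_subgroup]; ring
      _ ≤ (m + 3) * (m + 2).factorial := Nat.mul_le_mul hindex hHcard
      _ = (m + 1 + 2).factorial := (Nat.factorial_succ (m + 2)).symm

theorem finite_closure_and_two_mul_card_le {ι : Type*} [Fintype ι] (g : ι → G)
    (h3 : ∀ i, g i ^ 3 = 1) (h2 : ∀ i j, i ≠ j → (g i * g j) ^ 2 = 1) :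
    Finite (Subgroup.closure (Set.range g)) ∧
      2 * Nat.card (Subgroup.closure (Set.range g)) ≤ (Fintype.card ι + 2).factorial := by
  set e := (Fintype.equivFin ι).symm
  refine finite_and_two_mul_card_le_of_closure_eq_top
    (fun k => ⟨g (e k), Subgroup.subset_closure (Set.mem_range_self _)⟩) ?_
    (fun k => Subtype.ext (by simpa using h3 (e k)))
    (fun k l hkl => Subtype.ext (by simpa using h2 _ _ (e.injective.ne hkl)))
  rw [← Subgroup.closure_range_restrict_eq_top g]
  exact congrArg _ (e.surjective.range_comp fun i =>
    (⟨g i, Subgroup.subset_closure (Set.mem_range_self i)⟩ : Subgroup.closure (Set.range g)))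

end Carmichael

namespace Equiv.Perm

variable {β : Type*} [DecidableEq β]

/-- The cycle `a ↦ b ↦ c ↦ a` (for distinct `a`, `b`, `c`). -/
def threeCycle (a b c : β) : Perm β := swap a b * swap b c

section ThreeCycle

variable {a b c : β}

theorem threeCycle_apply (hab : a ≠ b) (hac : a ≠ c) (hbc : b ≠ c) (x : β) :
    threeCycle a b c x = if x = a then b else if x = b then c else if x = c then a else x := by
  simp only [threeCycle, mul_apply, swap_apply_def]
  split_ifs <;> simp_all

theorem isThreeCycle_threeCycle [Fintype β] (hab : a ≠ b) (hac : a ≠ c) (hbc : b ≠ c) :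
    IsThreeCycle (threeCycle a b c) := by
  rw [threeCycle, swap_comm a b]
  exact isThreeCycle_swap_mul_swap_same hab.symm hbc hac

theorem conj_threeCycle (σ : Perm β) (a b c : β) :
    σ * threeCycle a b c * σ⁻¹ = threeCycle (σ a) (σ b) (σ c) := by
  rw [threeCycle, threeCycle, swap_apply_apply, swap_apply_apply]
  group

theorem threeCycle_inv (hab : a ≠ b) (hac : a ≠ c) (hbc : b ≠ c) :
    (threeCycle a b c)⁻¹ = threeCycle a c b := by
  rw [inv_eq_iff_mul_eq_one]
  ext x
  simp only [mul_apply, one_apply, threeCycle_apply hab hac hbc,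
    threeCycle_apply hac hab hbc.symm]
  split_ifs <;> grind

theorem threeCycle_rotate (hab : a ≠ b) (hac : a ≠ c) (hbc : b ≠ c) :
    threeCycle a b c = threeCycle b c a := by
  ext x
  simp only [threeCycle_apply hab hac hbc, threeCycle_apply hbc hab.symm hac.symm]
  split_ifs <;> grind

theorem threeCycle_mul_threeCycle {d : β} (hab : a ≠ b) (hac : a ≠ c) (hbc : b ≠ c)
    (hda : d ≠ a) (hdb : d ≠ b) (hdc : d ≠ c) :
    threeCycle a b c * threeCycle d b c = swap a b * swap c d := by
  ext x
  simp only [mul_apply, threeCycle_apply hab hac hbc, threeCycle_apply hdb hdc hbc,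
    swap_apply_def]
  split_ifs <;> grind

theorem threeCycle_mul_threeCycle_sq {d : β} (hab : a ≠ b) (hac : a ≠ c) (hbc : b ≠ c)
    (hda : d ≠ a) (hdb : d ≠ b) (hdc : d ≠ c) :
    (threeCycle a b c * threeCycle d b c) ^ 2 = 1 := by
  have hnodup : [a, b, c, d].Nodup := by simp [*, hda.symm, hdb.symm, hdc.symm]
  rw [threeCycle_mul_threeCycle hab hac hbc hda hdb hdc,
    (disjoint_swap_swap hnodup).commute.mul_pow, pow_two, pow_two, swap_mul_self,
    swap_mul_self, one_mul]

theorem inv_threeCycle_mul_threeCycle {p q : β} (hab : a ≠ b) (hap : a ≠ p) (haq : a ≠ q)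
    (hbp : b ≠ p) (hbq : b ≠ q) (hpq : p ≠ q) :
    (threeCycle b p q)⁻¹ * threeCycle a p q = threeCycle a b q := by
  rw [threeCycle_inv hbp hbq hpq]
  ext x
  simp only [mul_apply, threeCycle_apply hbq hbp hpq.symm, threeCycle_apply hap haq hpq,
    threeCycle_apply hab haq hbq]
  split_ifs <;> grind

theorem threeCycle_eq_mul (hab : a ≠ b) (hac : a ≠ c) (hbc : b ≠ c) {q : β}
    (haq : a ≠ q) (hbq : b ≠ q) (hcq : c ≠ q) :
    threeCycle a b c = threeCycle c a q * threeCycle a b q := by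
  ext x
  simp only [mul_apply, threeCycle_apply hab hac hbc, threeCycle_apply hac.symm hcq haq,
    threeCycle_apply hab haq hbq]
  split_ifs <;> grind

end ThreeCycle

theorem IsThreeCycle.exists_eq_threeCycle [Fintype β] {σ : Perm β} (hσ : IsThreeCycle σ) :
    ∃ a b c : β, a ≠ b ∧ a ≠ c ∧ b ≠ c ∧ σ = threeCycle a b c := by
  obtain ⟨a, ha⟩ : σ.support.Nonempty := by
    rw [← Finset.card_pos, hσ.card_support]; norm_num
  have hnodup := hσ.nodup_iff_mem_support.2 ha
  simp only [List.nodup_cons, List.mem_cons, not_or, List.not_mem_nil,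
    not_false_eq_true, List.nodup_nil, and_true] at hnodup
  exact ⟨a, σ a, σ (σ a), hnodup.1.1, hnodup.1.2, hnodup.2,
    hσ.eq_swap_mul_swap_iff_mem_support.2 ha⟩

theorem alternatingGroup_le_of_threeCycle_mem [Fintype β] {p q : β} (hpq : p ≠ q)
    {W : Subgroup (Perm β)} (hW : ∀ x, x ≠ p → x ≠ q → threeCycle x p q ∈ W) :
    alternatingGroup β ≤ W := by
  have through_q : ∀ x y, x ≠ y → x ≠ q → y ≠ q → threeCycle x y q ∈ W := by
    intro x y hxy hxq hyq
    rcases eq_or_ne x p with rfl | hxp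
    · rw [threeCycle_rotate hxy hxq hyq, ← threeCycle_inv hxy.symm hyq hxq]
      exact W.inv_mem (hW y hxy.symm hyq)
    rcases eq_or_ne y p with rfl | hyp
    · exact hW x hxp hxq
    rw [← inv_threeCycle_mul_threeCycle hxy hxp hxq hyp hyq hpq]
    exact W.mul_mem (W.inv_mem (hW y hyp hyq)) (hW x hxp hxq)
  rw [← closure_three_cycles_eq_alternating, Subgroup.closure_le]
  rintro σ hσ
  obtain ⟨a, b, c, hab, hac, hbc, rfl⟩ := IsThreeCycle.exists_eq_threeCycle hσ
  rcases eq_or_ne a q with rfl | haq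
  · rw [threeCycle_rotate hab hac hbc]
    exact through_q b c hbc hab.symm hac.symm
  rcases eq_or_ne b q with rfl | hbq
  · rw [← threeCycle_rotate hac.symm hbc.symm hab]
    exact through_q c a hac.symm hbc.symm hab
  rcases eq_or_ne c q with rfl | hcq
  · exact through_q a b hab haq hbq
  rw [threeCycle_eq_mul hab hac hbc haq hbq hcq]
  exact W.mul_mem (through_q c a hac.symm hcq haq) (through_q a b hab haq hbq)

def signPerm : ℤˣ →* Perm (Fin 2) where
  toFun s := if s = 1 then 1 else swap 0 1
  map_one' := if_pos rfl
  map_mul' := by decide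

theorem sign_signPerm (s : ℤˣ) : sign (signPerm s) = s := by
  rcases Int.units_eq_one_or s with rfl | rfl <;> decide

variable [Fintype β]

def extendBySign : Perm β →* Perm (β ⊕ Fin 2) :=
  (sumCongrHom β (Fin 2)).comp ((MonoidHom.id _).prod (signPerm.comp sign))

@[simp]
theorem extendBySign_apply_inl (σ : Perm β) (x : β) :
    extendBySign σ (.inl x) = .inl (σ x) := rfl

@[simp]
theorem extendBySign_apply_inr (σ : Perm β) (k : Fin 2) :
    extendBySign σ (.inr k) = .inr (signPerm (sign σ) k) := rfl

theorem sign_extendBySign (σ : Perm β) : sign (extendBySign σ) = 1 := by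
  simp only [extendBySign, MonoidHom.coe_comp, Function.comp_apply, MonoidHom.prod_apply,
    MonoidHom.id_apply, sumCongrHom_apply, sign_sumCongr, sign_signPerm, Int.units_mul_self]

theorem inv_extendBySign_mul_threeCycle_mul (σ : Perm β) (a : β) :
    (extendBySign σ)⁻¹ * threeCycle (.inl a) (.inr 0) (.inr 1) * extendBySign σ =
      threeCycle (.inl (σ⁻¹ a)) (.inr 0) (.inr 1) ^ (sign σ : ℤ) := by
  rw [← inv_inv (extendBySign σ), inv_inv, ← map_inv, conj_threeCycle]
  simp only [extendBySign_apply_inl, extendBySign_apply_inr, sign_inv]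
  rcases Int.units_eq_one_or (sign σ) with h | h
  · simp [h, signPerm]
  · simp [h, signPerm, threeCycle_inv]

theorem sign_threeCycle {a b c : β} (hab : a ≠ b) (hbc : b ≠ c) : sign (threeCycle a b c) = 1 := by
  simp [threeCycle, sign_swap hab, sign_swap hbc]

def extendBySignAlt : Perm β →* alternatingGroup (β ⊕ Fin 2) :=
  extendBySign.codRestrict _ fun σ => mem_alternatingGroup.2 (sign_extendBySign σ)

def threeCycleAlt (p : β) : alternatingGroup (β ⊕ Fin 2) :=
  ⟨threeCycle (.inl p) (.inr 0) (.inr 1),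
    mem_alternatingGroup.2 (sign_threeCycle (by simp) (by simp))⟩

theorem threeCycleAlt_pow_three (p : β) : threeCycleAlt p ^ 3 = 1 := by
  refine Subtype.ext ?_
  rw [Subgroup.coe_pow, ← (isThreeCycle_threeCycle (a := (.inl p : β ⊕ Fin 2)) (b := .inr 0)
    (c := .inr 1) (by simp) (by simp) (by simp)).orderOf]
  exact pow_orderOf_eq_one _

theorem inv_extendBySignAlt_mul_threeCycleAlt_mul (σ : Perm β) (p : β) :
    (extendBySignAlt σ)⁻¹ * threeCycleAlt p * extendBySignAlt σ =
      threeCycleAlt (σ⁻¹ p) ^ (sign σ : ℤ) :=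
  Subtype.ext <| by
    simp only [Subgroup.coe_mul, Subgroup.coe_inv, Subgroup.coe_zpow]
    exact inv_extendBySign_mul_threeCycle_mul σ p

theorem threeCycleAlt_mul_threeCycleAlt_sq {p q : β} (hpq : p ≠ q) :
    (threeCycleAlt p * threeCycleAlt q) ^ 2 = 1 :=
  Subtype.ext (threeCycle_mul_threeCycle_sq (by simp) (by simp) (by simp) (by simpa using hpq.symm)
    (by simp) (by simp))

theorem eq_top_of_graph_mem {T : Type*} [Group T] {α : T →* Perm β}
    (htrans : ∀ x y, ∃ t, α t x = y) {p : β} {S : Subgroup (alternatingGroup (β ⊕ Fin 2) × T)}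
    (hgraph : ∀ t, (extendBySignAlt (α t), t) ∈ S) (hζ : (threeCycleAlt p, 1) ∈ S) : S = ⊤ := by
  have hconj : ∀ i, (threeCycleAlt i, 1) ∈ S := fun i => by
    obtain ⟨t, ht⟩ := htrans i p
    have h := S.mul_mem (S.mul_mem (S.inv_mem (hgraph t)) hζ) (hgraph t)
    rw [Prod.inv_mk, Prod.mk_mul_mk, Prod.mk_mul_mk, inv_extendBySignAlt_mul_threeCycleAlt_mul,
      mul_one, inv_mul_cancel, Perm.inv_eq_iff_eq.2 ht.symm] at h
    simpa [zpow_units_zpow_units] using S.zpow_mem h (sign (α t) : ℤ)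
  have hA : alternatingGroup (β ⊕ Fin 2) ≤
      (S.comap (MonoidHom.inl _ T)).map (alternatingGroup _).subtype := by
    refine alternatingGroup_le_of_threeCycle_mem (p := .inr 0) (q := .inr 1) (by simp) ?_
    rintro (i | k) h0 h1
    · exact ⟨threeCycleAlt i, hconj i, rfl⟩
    · fin_cases k <;> simp at h0 h1
  rw [eq_top_iff]
  rintro ⟨a, t⟩ -
  obtain ⟨b, hb, hba⟩ := hA (a * (extendBySignAlt (α t))⁻¹).2
  have h := S.mul_mem hb (hgraph t)
  rwa [Subtype.ext hba, MonoidHom.inl_apply, Prod.mk_mul_mk, inv_mul_cancel_right, one_mul] at h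

end Equiv.Perm

section TwoHomogeneous

variable {T J β : Type*} [Group T] [Group J] [DecidableEq β]

def IsTwoHomogeneous (α : T →* Perm β) : Prop :=
  ∀ P Q : Finset β, P.card = 2 → Q.card = 2 → ∃ t, P.image (α t) = Q

variable {α : T →* Perm β}

theorem IsTwoHomogeneous.exists_apply_eq [Fintype β] (h : IsTwoHomogeneous α)
    (hβ : 3 ≤ Fintype.card β) (x y : β) : ∃ t, α t x = y := by
  rcases eq_or_ne x y with rfl | hxy
  · exact ⟨1, by simp⟩
  obtain ⟨u, hu⟩ : ({x, y}ᶜ : Finset β).Nonempty := by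
    rw [← Finset.card_pos, Finset.card_compl, Finset.card_pair hxy]
    omega
  simp only [Finset.mem_compl, Finset.mem_insert, Finset.mem_singleton, not_or] at hu
  obtain ⟨t, ht⟩ := h {x, u} {y, u} (Finset.card_pair (Ne.symm hu.1))
    (Finset.card_pair (Ne.symm hu.2))
  have hmem : ∀ v ∈ ({x, u} : Finset β), α t v = y ∨ α t v = u := fun v hv => by
    have := ht ▸ Finset.mem_image_of_mem (α t) hv
    simpa using this
  rcases hmem x (by simp) with htx | htx
  · exact ⟨t, htx⟩
  · refine ⟨t * t, ?_⟩
    rcases hmem u (by simp) with htu | htu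
    · rw [map_mul, Perm.mul_apply, htx, htu]
    · exact absurd ((α t).injective (htx.trans htu.symm)).symm hu.1

theorem Finset.image_pair_eq_pair {γ : Type*} [DecidableEq γ] {f : β → γ} {i j : β} {p k : γ}
    (h : ({i, j} : Finset β).image f = {p, k}) : f i = p ∧ f j = k ∨ f i = k ∧ f j = p := by
  rw [Finset.image_insert, Finset.image_singleton, ← Finset.coe_inj, Finset.coe_pair,
    Finset.coe_pair] at h
  exact Set.pair_eq_pair_iff.1 h

variable {χ : T →* ℤˣ} {θ : T →* J}

theorem mul_sq_eq_one_of_isTwoHomogeneous (h2 : IsTwoHomogeneous α) (f : β → J)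
    (hf : ∀ t x, (θ t)⁻¹ * f x * θ t = f ((α t)⁻¹ x) ^ (χ t : ℤ)) {p k : β} (hpk : p ≠ k)
    (hrel : (f p * f k) ^ 2 = 1) {i j : β} (hij : i ≠ j) : (f i * f j) ^ 2 = 1 := by
  obtain ⟨t, ht⟩ := h2 {i, j} {p, k} (Finset.card_pair hij) (Finset.card_pair hpk)
  have hconj : (f ((α t)⁻¹ p) * f ((α t)⁻¹ k)) ^ 2 = 1 := by
    refine mul_sq_eq_one_of_zpow_units (u := χ t) ?_
    calc _ = (θ t)⁻¹ * (f p * f k) ^ 2 * θ t := by rw [← hf, ← hf, pow_two, pow_two]; group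
      _ = 1 := by rw [hrel]; group
  rcases Finset.image_pair_eq_pair ht with ⟨hi, hj⟩ | ⟨hi, hj⟩
  · rwa [Perm.inv_eq_iff_eq.2 hi.symm, Perm.inv_eq_iff_eq.2 hj.symm] at hconj
  · rw [Perm.inv_eq_iff_eq.2 hi.symm, Perm.inv_eq_iff_eq.2 hj.symm] at hconj
    exact mul_sq_eq_one_comm.1 hconj

end TwoHomogeneous

section TwistedConj

variable {T J : Type*} [Group T] [Group J] (χ : T →* ℤˣ) (θ : T →* J) (z : J)

def twistedConj (t : T) : J := ((θ t)⁻¹ * z * θ t) ^ (χ t : ℤ)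

@[simp]
theorem twistedConj_one : twistedConj χ θ z 1 = z := by
  simp [twistedConj]

theorem twistedConj_mul (s t : T) :
    twistedConj χ θ z (s * t) = (θ t)⁻¹ * twistedConj χ θ z s ^ (χ t : ℤ) * θ t := by
  simp only [twistedConj, map_mul, Units.val_mul, zpow_mul, ← inv_mul_zpow_mul, mul_inv_rev]
  group

theorem twistedConj_pow_three (hz : z ^ 3 = 1) (t : T) : twistedConj χ θ z t ^ 3 = 1 := by
  have h3 : ((θ t)⁻¹ * z * θ t) ^ 3 = 1 := by
    rw [← zpow_natCast, inv_mul_zpow_mul, zpow_natCast, hz, mul_one, inv_mul_cancel]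
  rw [twistedConj, ← zpow_natCast, ← zpow_mul, mul_comm, zpow_mul, zpow_natCast, h3, one_zpow]

theorem twistedConj_eq_iff (t : T) :
    twistedConj χ θ z t = z ↔ (θ t)⁻¹ * z * θ t = z ^ (χ t : ℤ) := by
  rw [twistedConj]
  exact ⟨fun h => (zpow_units_zpow_units _ (χ t)).symm.trans (congrArg (· ^ (χ t : ℤ)) h),
    fun h => by rw [h, zpow_units_zpow_units]⟩

variable {χ θ z}

theorem twistedConj_mul_of_eq {s : T} (hs : twistedConj χ θ z s = z) (t : T) :
    twistedConj χ θ z (s * t) = twistedConj χ θ z t := by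
  rw [twistedConj_mul, hs, twistedConj, inv_mul_zpow_mul]

variable (χ θ z)

def twistedCentralizer : Subgroup T where
  carrier := {t | twistedConj χ θ z t = z}
  one_mem' := twistedConj_one χ θ z
  mul_mem' hs ht := (twistedConj_mul_of_eq hs _).trans ht
  inv_mem' {s} hs := by
    have h := twistedConj_mul_of_eq hs s⁻¹
    rwa [mul_inv_cancel, twistedConj_one, eq_comm] at h

variable {χ θ z} {β : Type*} {α : T →* Perm β} {p : β}

theorem twistedConj_eq_of_inv_apply_eq (hstab : ∀ s, α s p = p → s ∈ twistedCentralizer χ θ z)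
    {t t' : T} (h : (α t)⁻¹ p = (α t')⁻¹ p) : twistedConj χ θ z t = twistedConj χ θ z t' := by
  have hs : α (t' * t⁻¹) p = p := by
    rw [map_mul, map_inv, Perm.mul_apply, h, Perm.inv_def, apply_symm_apply]
  rw [← twistedConj_mul_of_eq (hstab _ hs) t, inv_mul_cancel_right]

end TwistedConj

section ConjugatesOfZ

variable {T J β : Type*} [Group T] [Group J] {α : T →* Perm β} {χ : T →* ℤˣ}
  {θ : T →* J} {z : J} {p : β}

/-- `K` is generated by the twisted conjugates of `z`, one for each point of `β`; they satisfy
Carmichael's relations. -/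
theorem exists_subgroup_of_twistedCentralizer [DecidableEq β] [Fintype β]
    (h2 : IsTwoHomogeneous α) (hβ : 3 ≤ Fintype.card β) (hz : z ^ 3 = 1)
    (hstab : ∀ s, α s p = p → s ∈ twistedCentralizer χ θ z) {w : T} (hwp : α w p ≠ p)
    (hw : χ w = 1) (hzw : (z * ((θ w)⁻¹ * z * θ w)) ^ 2 = 1) :
    ∃ K : Subgroup J, z ∈ K ∧ (∀ t, ∀ x ∈ K, (θ t)⁻¹ * x * θ t ∈ K) ∧ Finite K ∧
      2 * Nat.card K ≤ (Fintype.card β + 2).factorial := by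
  have hsurj : Function.Surjective fun t => (α t)⁻¹ p := fun x => by
    obtain ⟨t, ht⟩ := h2.exists_apply_eq hβ x p
    exact ⟨t, Perm.inv_eq_iff_eq.2 ht.symm⟩
  set y : β → J := fun x => twistedConj χ θ z (Function.surjInv hsurj x)
  have hy : ∀ t, y ((α t)⁻¹ p) = twistedConj χ θ z t := fun t =>
    twistedConj_eq_of_inv_apply_eq hstab (Function.surjInv_eq hsurj _)
  have hconj : ∀ t x, (θ t)⁻¹ * y x * θ t = y ((α t)⁻¹ x) ^ (χ t : ℤ) := by
    intro t x
    obtain ⟨s, rfl⟩ := hsurj x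
    have hst : (α t)⁻¹ ((α s)⁻¹ p) = (α (s * t))⁻¹ p := by simp [mul_inv_rev]
    rw [hy, hst, hy, twistedConj_mul, inv_mul_zpow_mul, zpow_units_zpow_units]
  have hyp : y p = z := by simpa using hy 1
  have hyw : y ((α w)⁻¹ p) = (θ w)⁻¹ * z * θ w := by rw [hy, twistedConj, hw]; simp
  have hpw : p ≠ (α w)⁻¹ p := fun h => hwp (Perm.inv_eq_iff_eq.1 h.symm).symm
  refine ⟨Subgroup.closure (Set.range y), hyp ▸ Subgroup.subset_closure ⟨p, rfl⟩, ?_,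
    Carmichael.finite_closure_and_two_mul_card_le y
      (fun x => twistedConj_pow_three χ θ z hz _)
      (fun i j hij => mul_sq_eq_one_of_isTwoHomogeneous h2 y hconj hpw
        (by rwa [hyp, hyw]) hij)⟩
  intro t x hx
  have hle : Subgroup.closure (Set.range y) ≤
      (Subgroup.closure (Set.range y)).comap (MulAut.conj (θ t)⁻¹).toMonoidHom := by
    rw [Subgroup.closure_le]
    rintro _ ⟨x, rfl⟩
    simpa [hconj] using Subgroup.zpow_mem _ (Subgroup.subset_closure (Set.mem_range_self _)) _
  simpa using hle hx

end ConjugatesOfZ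

section Counting

variable {T J : Type*} [Group T] [Group J] {θ : T →* J} {z : J}

theorem finite_and_card_le_of_closure_eq_top [Finite T]
    (hgen : Subgroup.closure (insert z (Set.range θ)) = ⊤) {K : Subgroup J} [Finite K]
    (hzK : z ∈ K) (hK : ∀ t, ∀ x ∈ K, (θ t)⁻¹ * x * θ t ∈ K) :
    Finite J ∧ Nat.card J ≤ Nat.card T * Nat.card K := by
  have hsurj : Function.Surjective fun q : T × K => θ q.1 * q.2 := by
    intro g
    induction hgen ▸ Subgroup.mem_top g using Subgroup.closure_induction_left with
    | one => exact ⟨(1, 1), by simp⟩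
    | mul_left x hx g _ ih =>
      obtain ⟨⟨t, k⟩, rfl⟩ := ih
      rcases hx with rfl | ⟨s, rfl⟩
      · exact ⟨(t, ⟨_, hK t x hzK⟩ * k), by simp only [Subgroup.coe_mul]; group⟩
      · exact ⟨(s * t, k), by simp [mul_assoc]⟩
    | inv_mul_cancel x hx g _ ih =>
      obtain ⟨⟨t, k⟩, rfl⟩ := ih
      rcases hx with rfl | ⟨s, rfl⟩
      · exact ⟨(t, (⟨_, hK t x hzK⟩)⁻¹ * k), by
          simp only [Subgroup.coe_mul, Subgroup.coe_inv]; group⟩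
      · exact ⟨(s⁻¹ * t, k), by simp [mul_assoc]⟩
  exact ⟨Finite.of_surjective _ hsurj,
    (Nat.card_le_card_of_surjective _ hsurj).trans_eq (Nat.card_prod _ _)⟩

end Counting

section Presentation

theorem ite_one_neg_one_eq (s : ℤˣ) : (if s = 1 then (1 : ℤ) else -1) = s := by
  rcases Int.units_eq_one_or s with rfl | rfl <;> simp

variable {n : ℕ} {X : Type*} {R : Set (FreeGroup X)} {T : Type*} [Group T]
  {π : FreeGroup X →* T} {α : T →* Perm (Fin n)} {X₁ : Set (FreeGroup X)} {w : FreeGroup X}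

theorem forall_carmichaelRels_map_eq_one_iff {G : Type*} [Group G]
    (f : FreeGroup (X ⊕ Unit) →* G) :
    (∀ r ∈ carmichaelRels n R X₁ w π α, f r = 1) ↔
      (∀ r ∈ R, f (inclFree X r) = 1) ∧ f (zGen X) ^ 3 = 1 ∧
      (f (zGen X) * ((f (inclFree X w))⁻¹ * f (zGen X) * f (inclFree X w))) ^ 2 = 1 ∧
      ∀ u ∈ X₁, (f (inclFree X u))⁻¹ * f (zGen X) * f (inclFree X u) =
        f (zGen X) ^ (Perm.sign (α (π u)) : ℤ) := by
  simp only [carmichaelRels, ← Set.image_eq_iUnion, Set.mem_union, or_imp, forall_and,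
    Set.forall_mem_image, Set.mem_insert_iff, Set.mem_singleton_iff, forall_eq,
    map_mul, map_pow, map_inv, map_zpow, ite_one_neg_one_eq, mul_inv_eq_one, and_assoc]

abbrev CarmichaelGroup (n : ℕ) (R : Set (FreeGroup X)) (X₁ : Set (FreeGroup X)) (w : FreeGroup X)
    (π : FreeGroup X →* T) (α : T →* Perm (Fin n)) :=
  PresentedGroup (carmichaelRels n R X₁ w π α)

namespace CarmichaelGroup

noncomputable def ofBase (hπ : Function.Surjective π) (hker : π.ker ≤ Subgroup.normalClosure R) :
    T →* CarmichaelGroup n R X₁ w π α :=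
  π.liftOfRightInverse _ (Function.rightInverse_surjInv hπ)
    ⟨(PresentedGroup.mk _).comp (inclFree X),
      hker.trans (Subgroup.normalClosure_le_normal fun r hr =>
        PresentedGroup.one_of_mem (Or.inl (Or.inl ⟨r, hr, rfl⟩)))⟩

theorem ofBase_apply (hπ : Function.Surjective π) (hker : π.ker ≤ Subgroup.normalClosure R)
    (v : FreeGroup X) :
    ofBase (X₁ := X₁) (w := w) (α := α) hπ hker (π v) = PresentedGroup.mk _ (inclFree X v) :=
  π.liftOfRightInverse_comp_apply _ _ _ v

theorem lift_inclFree_sumElim {G : Type*} [Group G] (ρ : FreeGroup X →* G) (ζ : G)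
    (v : FreeGroup X) :
    FreeGroup.lift (Sum.elim (ρ ∘ FreeGroup.of) fun _ => ζ) (inclFree X v) = ρ v := by
  induction v using FreeGroup.induction_on <;> simp_all [inclFree]

def lift {G : Type*} [Group G] (ρ : T →* G) (ζ : G) (hR : ∀ r ∈ R, π r = 1) (h3 : ζ ^ 3 = 1)
    (hw : (ζ * ((ρ (π w))⁻¹ * ζ * ρ (π w))) ^ 2 = 1)
    (hu : ∀ u ∈ X₁, (ρ (π u))⁻¹ * ζ * ρ (π u) = ζ ^ (Perm.sign (α (π u)) : ℤ)) :
    CarmichaelGroup n R X₁ w π α →* G :=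
  PresentedGroup.toGroup (f := Sum.elim (ρ.comp π ∘ FreeGroup.of) fun _ => ζ) <| by
    refine (forall_carmichaelRels_map_eq_one_iff _).2 ⟨fun r hr => ?_, ?_, ?_, fun u hu' => ?_⟩ <;>
      simp only [lift_inclFree_sumElim, MonoidHom.comp_apply, zGen, FreeGroup.lift_apply_of,
        Sum.elim_inr]
    exacts [by rw [hR r hr, map_one], h3, hw, hu u hu']

section Lift

variable {G : Type*} [Group G] {ρ : T →* G} {ζ : G} {hR : ∀ r ∈ R, π r = 1} {h3 : ζ ^ 3 = 1}
  {hw : (ζ * ((ρ (π w))⁻¹ * ζ * ρ (π w))) ^ 2 = 1}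
  {hu : ∀ u ∈ X₁, (ρ (π u))⁻¹ * ζ * ρ (π u) = ζ ^ (Perm.sign (α (π u)) : ℤ)}

@[simp]
theorem lift_mk_inclFree (v : FreeGroup X) :
    lift ρ ζ hR h3 hw hu (PresentedGroup.mk _ (inclFree X v)) = ρ (π v) :=
  lift_inclFree_sumElim (ρ.comp π) ζ v

@[simp]
theorem lift_mk_zGen : lift ρ ζ hR h3 hw hu (PresentedGroup.mk _ (zGen X)) = ζ :=
  FreeGroup.lift_apply_of

end Lift

theorem finite_and_two_mul_card_le [Finite T] (hn : 3 ≤ n) (hπ : Function.Surjective π)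
    (hker : π.ker ≤ Subgroup.normalClosure R) (h2 : IsTwoHomogeneous α) {p : Fin n}
    (hstab : ∀ t, α t p = p → t ∈ Subgroup.closure (π '' X₁)) (hwp : α (π w) p ≠ p)
    (hw : Perm.sign (α (π w)) = 1) :
    Finite (CarmichaelGroup n R X₁ w π α) ∧
      2 * Nat.card (CarmichaelGroup n R X₁ w π α) ≤ (n + 2).factorial * Nat.card T := by
  set θ : T →* CarmichaelGroup n R X₁ w π α := ofBase hπ hker
  obtain ⟨-, hz3, hzw, hzu⟩ := (forall_carmichaelRels_map_eq_one_iff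
    (PresentedGroup.mk (carmichaelRels n R X₁ w π α))).1 fun _ => PresentedGroup.one_of_mem
  have hstab' (t : T) (ht : α t p = p) :
      t ∈ twistedCentralizer (Perm.sign.comp α) θ (PresentedGroup.mk _ (zGen X)) := by
    refine Subgroup.closure_le _ |>.2 ?_ (hstab t ht)
    rintro _ ⟨u, hu, rfl⟩
    exact (twistedConj_eq_iff _ _ _ _).2 (by simpa [θ, ofBase_apply] using hzu u hu)
  obtain ⟨K, hzK, hK, hKfin, hKcard⟩ := exists_subgroup_of_twistedCentralizer h2
    (by simpa using hn) hz3 hstab' hwp hw (by simpa [θ, ofBase_apply] using hzw)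
  have hgen : Subgroup.closure (insert (PresentedGroup.mk _ (zGen X)) (Set.range θ)) = ⊤ := by
    refine top_le_iff.1 ((PresentedGroup.closure_range_of _).ge.trans (Subgroup.closure_mono ?_))
    rintro _ ⟨x | u, rfl⟩
    · exact Or.inr ⟨π (FreeGroup.of x), ofBase_apply hπ hker _⟩
    · exact Or.inl rfl
  obtain ⟨hfin, hcard⟩ := finite_and_card_le_of_closure_eq_top hgen hzK hK
  refine ⟨hfin, ?_⟩
  calc 2 * Nat.card _ ≤ Nat.card T * (2 * Nat.card K) := by
        rw [mul_left_comm]; exact Nat.mul_le_mul_left 2 hcard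
    _ ≤ Nat.card T * (n + 2).factorial := Nat.mul_le_mul_left _ (by simpa using hKcard)
    _ = (n + 2).factorial * Nat.card T := mul_comm _ _

theorem exists_surjective_hom (hn : 3 ≤ n) (hπ : Function.Surjective π) (hR : ∀ r ∈ R, π r = 1)
    (h2 : IsTwoHomogeneous α) {p : Fin n} (hfix : ∀ u ∈ X₁, α (π u) p = p)
    (hwp : α (π w) p ≠ p) (hw : Perm.sign (α (π w)) = 1) :
    ∃ φ : CarmichaelGroup n R X₁ w π α →* alternatingGroup (Fin n ⊕ Fin 2) × T,
      Function.Surjective φ := by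
  set E := Perm.extendBySignAlt.comp α
  have hconj (t : T) : (E t)⁻¹ * Perm.threeCycleAlt p * E t =
      Perm.threeCycleAlt ((α t)⁻¹ p) ^ (Perm.sign (α t) : ℤ) :=
    Perm.inv_extendBySignAlt_mul_threeCycleAlt_mul _ _
  have hpw : p ≠ (α (π w))⁻¹ p := fun h => hwp (Perm.inv_eq_iff_eq.1 h.symm).symm
  let φ₁ : CarmichaelGroup n R X₁ w π α →* _ :=
    lift E (Perm.threeCycleAlt p) hR (Perm.threeCycleAlt_pow_three p)
      (by rw [hconj, hw, Units.val_one, zpow_one]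
          exact Perm.threeCycleAlt_mul_threeCycleAlt_sq hpw)
      (fun u hu => by rw [hconj, Perm.inv_eq_iff_eq.2 (hfix u hu).symm])
  let φ₂ : CarmichaelGroup n R X₁ w π α →* T :=
    lift (MonoidHom.id T) 1 hR (one_pow 3) (by simp) (by simp)
  refine ⟨φ₁.prod φ₂, MonoidHom.range_eq_top.1 ?_⟩
  refine Perm.eq_top_of_graph_mem (p := p) (h2.exists_apply_eq (by simpa using hn)) (fun t => ?_)
    ⟨PresentedGroup.mk _ (zGen X), by simp [φ₁, φ₂]⟩
  obtain ⟨v, rfl⟩ := hπ t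
  exact ⟨PresentedGroup.mk _ (inclFree X v), by simp [φ₁, φ₂, E]⟩

end CarmichaelGroup

end Presentation

/-- Let `T = ⟨X ∣ R⟩` be a finite group acting 2-homogeneously on `n ≥ 3` points via `α`,
let the images of `X₁` generate the stabilizer of the point `0`, and let `w` be a word whose
image moves `0` and is even.  Then the group presented on `X ⊕ Unit` with the relators `R`,
`z³`, `(z·z^w)²` and `z^u = z^{sign u}` (`u ∈ X₁`) is isomorphic to `A_{n+2} × T`. -/
theorem using_Carmichael
    (n : ℕ) (hn : 3 ≤ n) (X : Type*) (R : Set (FreeGroup X))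
    (T : Type*) [Group T] [Finite T]
    (π : FreeGroup X →* T) (hπ : Function.Surjective π)
    (hker : π.ker = Subgroup.normalClosure R)
    (α : T →* Equiv.Perm (Fin n))
    (h2hom : ∀ P Q : Finset (Fin n), P.card = 2 → Q.card = 2 →
      ∃ t : T, P.image (α t) = Q)
    (X₁ : Set (FreeGroup X))
    (hX₁ : (Subgroup.closure (⇑π '' X₁) : Set T) = {t : T | α t ⟨0, by omega⟩ = ⟨0, by omega⟩})
    (w : FreeGroup X) (hw : α (π w) ⟨0, by omega⟩ ≠ ⟨0, by omega⟩)
    (hwsign : Equiv.Perm.sign (α (π w)) = 1) :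
    Nonempty (PresentedGroup (carmichaelRels n R X₁ w π α) ≃*
      ↥(alternatingGroup (Fin (n + 2))) × T) := by
  have hstab (t : T) (ht : α t ⟨0, by omega⟩ = ⟨0, by omega⟩) : t ∈ Subgroup.closure (π '' X₁) :=
    (Set.ext_iff.1 hX₁ t).2 ht
  have hfix (u : FreeGroup X) (hu : u ∈ X₁) : α (π u) ⟨0, by omega⟩ = ⟨0, by omega⟩ :=
    (Set.ext_iff.1 hX₁ _).1 (Subgroup.subset_closure ⟨u, hu, rfl⟩)
  obtain ⟨hfin, hcard⟩ :=
    CarmichaelGroup.finite_and_two_mul_card_le hn hπ hker.le h2hom hstab hw hwsign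
  have hR (r : FreeGroup X) (hr : r ∈ R) : π r = 1 := hker.ge (Subgroup.subset_normalClosure hr)
  obtain ⟨φ, hφ⟩ := CarmichaelGroup.exists_surjective_hom hn hπ hR h2hom hfix hw hwsign
  have : Nontrivial (Fin n ⊕ Fin 2) := ⟨.inr 0, .inr 1, by simp⟩
  have hA : 2 * Nat.card (alternatingGroup (Fin n ⊕ Fin 2)) = (n + 2).factorial := by
    rw [two_mul_nat_card_alternatingGroup, Nat.card_perm, Nat.card_sum, Nat.card_fin, Nat.card_fin]
  have hbij : Function.Bijective φ := (Nat.bijective_iff_surjective_and_card φ).2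
    ⟨hφ, le_antisymm (by rw [Nat.card_prod]; nlinarith) (Nat.card_le_card_of_surjective φ hφ)⟩
  exact ⟨(MulEquiv.ofBijective φ hbij).trans
    (finSumFinEquiv.altCongrHom.prodCongr (MulEquiv.refl T))⟩
end

section
/- Let G be a finite group, X a type, and π : F_X → G a surjective homomorphism from the free group on X whose kernel is the normal closure of a finite set R of elements of F_X. Let D be a finite subset of G that generates G. Then there exist a surjective homomorphism ψ from the free group on (the type of elements of) D onto G sending the generator corresponding to each d ∈ D to d itself, and a finite set R' of elements of that free group with |R'| ≤ |D| + |R| - |{π(x) : x ∈ X, as generators} ∩ D|, such that the kernel of ψ equals the normal closure of R'. -/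
/-- If the finite group `G` has a presentation `⟨X ∣ R⟩` and `D` is a finite generating
subset of `G`, then `G` has a presentation on the generators `D` (each generator being sent
to itself) with at most `|D| + |R| - |{π(x) : x ∈ X} ∩ D|` relations. -/
theorem presentation_on_generating_set
    (G : Type*) [Group G] [Finite G] (X : Type*)
    (π : FreeGroup X →* G) (hπ : Function.Surjective π)
    (R : Finset (FreeGroup X))
    (hker : π.ker = Subgroup.normalClosure (R : Set (FreeGroup X)))
    (D : Finset G) (hD : Subgroup.closure (D : Set G) = ⊤) :
    ∃ ψ : FreeGroup {d // d ∈ D} →* G, Function.Surjective ψ ∧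
      (∀ d : {d // d ∈ D}, ψ (FreeGroup.of d) = (d : G)) ∧
      ∃ R' : Finset (FreeGroup {d // d ∈ D}),
        R'.card ≤ D.card + R.card -
          (Set.range (fun x : X => π (FreeGroup.of x)) ∩ (D : Set G)).ncard ∧
        ψ.ker = Subgroup.normalClosure (R' : Set (FreeGroup {d // d ∈ D})) := by
  classical
  set f' : X → G := fun x => π (FreeGroup.of x) with hf'
  set ψ : FreeGroup {d // d ∈ D} →* G := FreeGroup.lift (fun d => (d : G)) with hψdef
  have hψof : ∀ d : {d // d ∈ D}, ψ (FreeGroup.of d) = (d : G) := fun d => FreeGroup.lift_apply_of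
  have hψ : Function.Surjective ψ := by
    rw [← MonoidHom.range_eq_top, eq_top_iff, ← hD, Subgroup.closure_le]
    rintro g hg
    exact ⟨FreeGroup.of ⟨g, hg⟩, hψof _⟩
  -- choice functions
  have hπ' := hπ
  have hψ' := hψ
  choose w hw using hπ'
  choose v hv using hψ'
  -- substitution σ : F_X → F_D
  set vmap : X → FreeGroup {d // d ∈ D} :=
    fun x => if h : f' x ∈ D then FreeGroup.of ⟨f' x, h⟩ else v (f' x) with hvmap
  have hvmapψ : ∀ x, ψ (vmap x) = f' x := by
    intro x
    simp only [hvmap]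
    split
    · rw [hψof]
    · exact hv _
  set σ : FreeGroup X →* FreeGroup {d // d ∈ D} := FreeGroup.lift vmap with hσdef
  have hσof : ∀ x, σ (FreeGroup.of x) = vmap x := fun x => FreeGroup.lift_apply_of
  have hψσ : ∀ u, ψ (σ u) = π u := by
    intro u
    have : ψ.comp σ = π := by
      apply FreeGroup.ext_hom
      intro x
      simp only [MonoidHom.comp_apply, hσof, hvmapψ, hf']
    rw [← this]; rfl
  -- word representing each generator d, chosen to be a generator image when possible
  set wmap : {d // d ∈ D} → FreeGroup X :=
    fun d => if h : (d : G) ∈ Set.range f' then FreeGroup.of h.choose else w d with hwmap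
  have hwmapπ : ∀ d, π (wmap d) = (d : G) := by
    intro d
    simp only [hwmap]
    split
    · next h => exact h.choose_spec
    · exact hw _
  set rel : {d // d ∈ D} → FreeGroup {d // d ∈ D} :=
    fun d => (FreeGroup.of d)⁻¹ * σ (wmap d) with hrel
  have hrel_triv : ∀ d : {d // d ∈ D}, (d : G) ∈ Set.range f' → rel d = 1 := by
    intro d hd
    have h1 : σ (wmap d) = FreeGroup.of d := by
      simp only [hwmap, dif_pos hd, hσof, hvmap]
      have hx : f' hd.choose = (d : G) := hd.choose_spec
      rw [dif_pos (show f' hd.choose ∈ D by rw [hx]; exact d.2)]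
      congr 1
      exact Subtype.ext hx
    simp only [hrel, h1, inv_mul_cancel]
  set A : Finset (FreeGroup {d // d ∈ D}) := R.image σ with hA
  set B : Finset (FreeGroup {d // d ∈ D}) := D.attach.image rel with hB
  set R'0 : Finset (FreeGroup {d // d ∈ D}) := A ∪ B with hR'0
  set R' : Finset (FreeGroup {d // d ∈ D}) := R'0.erase 1 with hR'
  set N : Subgroup (FreeGroup {d // d ∈ D}) := Subgroup.normalClosure ↑R'0 with hN
  -- elements of R'0 are in the relevant subgroups
  have hArel : ∀ r ∈ R, σ r ∈ R'0 := fun r hr =>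
    Finset.mem_union_left _ (Finset.mem_image.2 ⟨r, hr, rfl⟩)
  have hBrel : ∀ d : {d // d ∈ D}, rel d ∈ R'0 := fun d =>
    Finset.mem_union_right _ (Finset.mem_image.2 ⟨d, Finset.mem_attach _ _, rfl⟩)
  have hsub : (R'0 : Set (FreeGroup {d // d ∈ D})) ⊆ ψ.ker := by
    intro y hy
    rw [Finset.mem_coe, hR'0, Finset.mem_union] at hy
    rw [SetLike.mem_coe, MonoidHom.mem_ker]
    rcases hy with h | h
    · rw [hA, Finset.mem_image] at h
      obtain ⟨r, hr, rfl⟩ := h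
      rw [hψσ]
      have : r ∈ π.ker := by rw [hker]; exact Subgroup.subset_normalClosure hr
      exact this
    · rw [hB, Finset.mem_image] at h
      obtain ⟨d, _, rfl⟩ := h
      simp only [hrel]
      rw [map_mul, map_inv, hψof, hψσ, hwmapπ, inv_mul_cancel]
  have hNle : N ≤ ψ.ker := Subgroup.normalClosure_le_normal hsub
  have hkerle : ψ.ker ≤ N := by
    set mk : FreeGroup {d // d ∈ D} →* FreeGroup {d // d ∈ D} ⧸ N :=
      QuotientGroup.mk' N with hmk
    set φ : FreeGroup X →* FreeGroup {d // d ∈ D} ⧸ N := mk.comp σ with hφ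
    have hπφ : π.ker ≤ φ.ker := by
      rw [hker]
      apply Subgroup.normalClosure_le_normal
      intro r hr
      rw [SetLike.mem_coe, MonoidHom.mem_ker, hφ, MonoidHom.comp_apply, hmk,
        QuotientGroup.mk'_apply, QuotientGroup.eq_one_iff]
      exact Subgroup.subset_normalClosure (hArel r hr)
    set φbar : G →* FreeGroup {d // d ∈ D} ⧸ N :=
      (π.liftOfRightInverse (Function.surjInv hπ) (Function.rightInverse_surjInv hπ))
        ⟨φ, hπφ⟩ with hφbar
    have hφbarπ : ∀ u, φbar (π u) = φ u := fun u =>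
      π.liftOfRightInverse_comp_apply _ _ ⟨φ, hπφ⟩ u
    have hcomm : ∀ g, mk g = φbar (ψ g) := by
      have : mk = φbar.comp ψ := by
        apply FreeGroup.ext_hom
        intro d
        rw [MonoidHom.comp_apply, hψof, ← hwmapπ d, hφbarπ, hφ, MonoidHom.comp_apply,
          hmk, QuotientGroup.mk'_apply, QuotientGroup.mk'_apply]
        rw [QuotientGroup.eq]
        exact Subgroup.subset_normalClosure (hBrel d)
      intro g; rw [this]; rfl
    intro g hg
    rw [MonoidHom.mem_ker] at hg
    have : mk g = 1 := by rw [hcomm, hg, map_one]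
    rwa [hmk, QuotientGroup.mk'_apply, QuotientGroup.eq_one_iff] at this
  have hkerN : ψ.ker = N := le_antisymm hkerle hNle
  have hNR' : Subgroup.normalClosure (R' : Set (FreeGroup {d // d ∈ D})) = N := by
    apply le_antisymm
    · apply Subgroup.normalClosure_le_normal
      intro y hy
      exact Subgroup.subset_normalClosure (Finset.erase_subset _ _ hy)
    · apply Subgroup.normalClosure_le_normal
      intro y hy
      rw [Finset.mem_coe] at hy
      by_cases h1 : y = 1
      · rw [h1]; exact Subgroup.one_mem _
      · exact Subgroup.subset_normalClosure (Finset.mem_erase.2 ⟨h1, hy⟩)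
  -- cardinality
  set k := (Set.range f' ∩ (D : Set G)).ncard with hk
  set T : Finset G := D.filter (· ∈ Set.range f') with hT
  have hTk : T.card = k := by
    rw [hk, ← Set.ncard_coe_finset]
    congr 1
    ext g
    simp [hT, and_comm]
  have hkD : k ≤ D.card := by
    rw [← hTk]; exact Finset.card_filter_le _ _
  set Dout : Finset {d // d ∈ D} :=
    D.attach.filter (fun d : {d // d ∈ D} => (d : G) ∉ Set.range f') with hDout
  set Din : Finset {d // d ∈ D} :=
    D.attach.filter (fun d : {d // d ∈ D} => (d : G) ∈ Set.range f') with hDin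
  have hcard : R'.card ≤ D.card + R.card - k := by
    have hsub2 : R' ⊆ A ∪ Dout.image rel := by
      intro y hy
      rw [hR', Finset.mem_erase] at hy
      obtain ⟨hy1, hy2⟩ := hy
      rw [hR'0, Finset.mem_union] at hy2
      rcases hy2 with h | h
      · exact Finset.mem_union_left _ h
      · rw [hB, Finset.mem_image] at h
        obtain ⟨d, _, rfl⟩ := h
        apply Finset.mem_union_right
        rw [Finset.mem_image]
        refine ⟨d, ?_, rfl⟩
        rw [hDout, Finset.mem_filter]
        exact ⟨Finset.mem_attach _ _, fun hd => hy1 (hrel_triv d hd)⟩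
    have h1 : Din.card + Dout.card = D.card := by
      rw [hDin, hDout, Finset.card_filter_add_card_filter_not, Finset.card_attach]
    have h2 : Din.card = k := by
      rw [← hTk, hT, hDin]
      refine Finset.card_bij (fun d _ => (d : G)) ?_ ?_ ?_
      · intro a ha
        rw [Finset.mem_filter] at ha ⊢
        exact ⟨a.2, ha.2⟩
      · intro a _ b _ hab
        exact Subtype.ext hab
      · intro b hb
        rw [Finset.mem_filter] at hb
        exact ⟨⟨b, hb.1⟩, Finset.mem_filter.2 ⟨Finset.mem_attach _ _, hb.2⟩, rfl⟩
    calc R'.card ≤ (A ∪ Dout.image rel).card := Finset.card_le_card hsub2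
      _ ≤ A.card + (Dout.image rel).card := Finset.card_union_le _ _
      _ ≤ R.card + Dout.card := by
          gcongr
          · exact Finset.card_image_le
          · exact Finset.card_image_le
      _ ≤ D.card + R.card - k := by omega
  exact ⟨ψ, hψ, hψof, R', hcard, by rw [hkerN, hNR']⟩
end
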